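/- arXiv:0906.4315 — 4 statements merged into one kernel-verified Lean document; each statement's English description precedes it below -/
import Mathlib

section
/- (Liveness part of the fairness-program lemma.) In any event structure satisfying the event-structure axioms, if clauses (ψ₃) and (ψ₄) of Fair-Pg(φ,t,l,a) hold and the strong communication-fairness condition FairSend(l) holds, then the liveness clause (φ₃) of the specification Fair(φ,t,l) holds: either some event has agent i and for every event e of agent i there is e' with agent(e') = i, e ⪯_i e', and ¬φ(stateAfter(e')); or no event has agent i and ¬φ(initstate_i); or some event has agent i and for every event e of agent i there is a receive event e' on l with e ⪯_i send(e'). -/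
/-- An event structure over agents `AG`, links `Links`, local actions `Act`,
values `Val` (with a distinguished null value `bot`), and local variables `X`
(where `mv l` is the variable `msg(l)` recording the message sent on link `l`).
Local states are assignments of values to variables, i.e. functions `X → Val`.
An event of kind `Sum.inl l` is a receive on link `l`; an event of kind
`Sum.inr a` is a local `a`-event.  The fields `lt i` are the local strict total
orders `≺ᵢ` on the events of agent `i`, and `send` assigns to each receive
event its corresponding send event.  The event-structure axioms are the
`lt_*` order axioms and the `rcv_*` axioms about receive events. -/
structure EventStructure (AG Links Act Val X : Type) (source dest : Links → AG)
    (bot : Val) (mv : Links → X) where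
  E : Type
  agent : E → AG
  kind : E → Links ⊕ Act
  val : E → Val
  stateBefore : E → X → Val
  stateAfter : E → X → Val
  initstate : AG → X → Val
  lt : AG → E → E → Prop
  send : E → E
  lt_irrefl : ∀ i e, ¬ lt i e e
  lt_trans : ∀ i e₁ e₂ e₃, lt i e₁ e₂ → lt i e₂ e₃ → lt i e₁ e₃
  lt_total : ∀ i e e', agent e = i → agent e' = i → lt i e e' ∨ e = e' ∨ lt i e' e
  rcv_agent : ∀ e l, kind e = Sum.inl l → agent e = dest l
  rcv_send_agent : ∀ e l, kind e = Sum.inl l → agent (send e) = source l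
  rcv_val : ∀ e l, kind e = Sum.inl l → val e = stateAfter (send e) (mv l)
  rcv_val_ne : ∀ e l, kind e = Sum.inl l → val e ≠ bot

namespace EventStructure

variable {AG Links Act Val X : Type} {source dest : Links → AG} {bot : Val}
  {mv : Links → X}

/-- `e ⪯ᵢ e'`: the reflexive closure of the local order `≺ᵢ`. -/
def locLe (es : EventStructure AG Links Act Val X source dest bot mv) (i : AG)
    (e e' : es.E) : Prop :=
  es.lt i e e' ∨ e = e'

/-- Clause (ψ₁) of `Fair-Pg(φ,t,l,a)`: only `a`-events of agent `i` set `msg(l)`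
to a non-null value. -/
def psi1 (es : EventStructure AG Links Act Val X source dest bot mv)
    (i : AG) (l : Links) (a : Act) : Prop :=
  ∀ e, es.agent e = i → es.stateAfter e (mv l) ≠ bot → es.kind e = Sum.inr a

/-- Clause (ψ₂): agent `i` performs action `a` only if the precondition `phi`
holds of its local state. -/
def psi2 (es : EventStructure AG Links Act Val X source dest bot mv)
    (i : AG) (a : Act) (phi : (X → Val) → Prop) : Prop :=
  ∀ e, es.agent e = i → es.kind e = Sum.inr a → phi (es.stateBefore e)

/-- Clause (ψ₃): the effect of an `a`-event of agent `i` is to set `msg(l)` to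
the term `t` evaluated at the state before the event. -/
def psi3 (es : EventStructure AG Links Act Val X source dest bot mv)
    (i : AG) (l : Links) (a : Act) (t : (X → Val) → Val) : Prop :=
  ∀ e, es.agent e = i → es.kind e = Sum.inr a →
    es.stateAfter e (mv l) = t (es.stateBefore e)

/-- Clause (ψ₄), the weak-fairness clause. -/
def psi4 (es : EventStructure AG Links Act Val X source dest bot mv)
    (i : AG) (a : Act) (phi : (X → Val) → Prop) : Prop :=
  ((∃ e, es.agent e = i) ∧
    ∀ e, es.agent e = i → ∃ e', es.agent e' = i ∧ es.locLe i e e' ∧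
      (¬ phi (es.stateAfter e') ∨ es.kind e' = Sum.inr a)) ∨
  ((¬ ∃ e, es.agent e = i) ∧ ¬ phi (es.initstate i))

/-- The strong communication-fairness condition `FairSend(l)`, where
`i = source l`. -/
def FairSend (es : EventStructure AG Links Act Val X source dest bot mv)
    (i : AG) (l : Links) : Prop :=
  (∀ e, es.agent e = i → ∃ e', es.agent e' = i ∧ es.locLe i e e' ∧
      es.stateAfter e' (mv l) ≠ bot) →
  ∀ e, es.agent e = i → ∃ e', es.kind e' = Sum.inl l ∧ es.locLe i e (es.send e')

/-- Clause (φ₁) of the specification `Fair(φ,t,l)`: the precondition held at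
the sender's state when any message received on `l` was sent. -/
def phi1spec (es : EventStructure AG Links Act Val X source dest bot mv)
    (l : Links) (phi : (X → Val) → Prop) : Prop :=
  ∀ e', es.kind e' = Sum.inl l → phi (es.stateBefore (es.send e'))

/-- Clause (φ₂): every message received on `l` is `t` evaluated at the sender's
state at the time of sending. -/
def phi2spec (es : EventStructure AG Links Act Val X source dest bot mv)
    (l : Links) (t : (X → Val) → Val) : Prop :=
  ∀ e', es.kind e' = Sum.inl l → es.val e' = t (es.stateBefore (es.send e'))

/-- Clause (φ₃), the liveness clause of `Fair(φ,t,l)`, where `i = source l`. -/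
def phi3spec (es : EventStructure AG Links Act Val X source dest bot mv)
    (i : AG) (l : Links) (phi : (X → Val) → Prop) : Prop :=
  ((∃ e, es.agent e = i) ∧
    ∀ e, es.agent e = i → ∃ e', es.agent e' = i ∧ es.locLe i e e' ∧
      ¬ phi (es.stateAfter e')) ∨
  ((¬ ∃ e, es.agent e = i) ∧ ¬ phi (es.initstate i)) ∨
  ((∃ e, es.agent e = i) ∧
    ∀ e, es.agent e = i → ∃ e', es.kind e' = Sum.inl l ∧ es.locLe i e (es.send e'))

/-- The specification `Fair(φ,t,l)`: conjunction of (φ₁), (φ₂), (φ₃). -/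
def FairSpec (es : EventStructure AG Links Act Val X source dest bot mv)
    (i : AG) (l : Links) (phi : (X → Val) → Prop) (t : (X → Val) → Val) : Prop :=
  es.phi1spec l phi ∧ es.phi2spec l t ∧ es.phi3spec i l phi

end EventStructure

/-! A property `P` that recurs along the events of agent `i` and is split into `P ∨ Q`
recurs in one of the two parts: if `Q` stops recurring after some event `e₀`, then beyond
the later of `e` and `e₀` only `P` can occur. With `P = ¬φ` and `Q` = "`a` is performed", (ψ₄)
yields either the first disjunct of (φ₃) directly or, through (ψ₃) and `t ≠ ⊥`, the hypothesis
of `FairSend(l)`, whose conclusion is the last disjunct of (φ₃). -/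

namespace EventStructure

variable {AG Links Act Val X : Type} {source dest : Links → AG} {bot : Val}
  {mv : Links → X} (es : EventStructure AG Links Act Val X source dest bot mv) {i : AG}

theorem locLe_refl (e : es.E) : es.locLe i e e := Or.inr rfl

theorem locLe_trans {e₁ e₂ e₃ : es.E} (h₁₂ : es.locLe i e₁ e₂) (h₂₃ : es.locLe i e₂ e₃) :
    es.locLe i e₁ e₃ := by
  rcases h₁₂ with h₁₂ | rfl
  · rcases h₂₃ with h₂₃ | rfl
    · exact Or.inl (es.lt_trans i _ _ _ h₁₂ h₂₃)
    · exact Or.inl h₁₂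
  · exact h₂₃

theorem exists_locLe_both {e e' : es.E} (he : es.agent e = i) (he' : es.agent e' = i) :
    ∃ m, es.agent m = i ∧ es.locLe i e m ∧ es.locLe i e' m := by
  rcases es.lt_total i e e' he he' with h | rfl | h
  · exact ⟨e', he', Or.inl h, es.locLe_refl e'⟩
  · exact ⟨e, he, es.locLe_refl e, es.locLe_refl e⟩
  · exact ⟨e, he, es.locLe_refl e, Or.inl h⟩

def Recurrent (i : AG) (P : es.E → Prop) : Prop :=
  ∀ e, es.agent e = i → ∃ e', es.agent e' = i ∧ es.locLe i e e' ∧ P e'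

variable {es}

theorem Recurrent.mono {P Q : es.E → Prop} (hP : es.Recurrent i P)
    (hPQ : ∀ e, es.agent e = i → P e → Q e) : es.Recurrent i Q := fun e he =>
  let ⟨e', he', hle, hp⟩ := hP e he
  ⟨e', he', hle, hPQ e' he' hp⟩

theorem recurrent_or_distrib {P Q : es.E → Prop} :
    es.Recurrent i (fun e => P e ∨ Q e) ↔ es.Recurrent i P ∨ es.Recurrent i Q := by
  refine ⟨fun hPQ => ?_, ?_⟩
  · by_contra! ⟨hP, hQ⟩
    obtain ⟨e₀, he₀, hQ₀⟩ : ∃ e₀, es.agent e₀ = i ∧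
        ∀ e', es.agent e' = i → es.locLe i e₀ e' → ¬ Q e' := by
      simpa [Recurrent] using hQ
    refine hP fun e he => ?_
    obtain ⟨m, hm, hem, he₀m⟩ := es.exists_locLe_both he he₀
    obtain ⟨e', he', hme', hpq⟩ := hPQ m hm
    have hlate : es.locLe i e₀ e' := es.locLe_trans he₀m hme'
    exact ⟨e', he', es.locLe_trans hem hme', hpq.resolve_right (hQ₀ e' he' hlate)⟩
  · rintro (hP | hQ)
    · exact hP.mono fun _ _ => Or.inl
    · exact hQ.mono fun _ _ => Or.inr

end EventStructure

theorem fair_pg_liveness_general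
    {AG Links Act Val X : Type} {source dest : Links → AG} {bot : Val}
    {mv : Links → X}
    (es : EventStructure AG Links Act Val X source dest bot mv)
    (i : AG) (l : Links) (a : Act)
    (phi : (X → Val) → Prop) (t : (X → Val) → Val) (ht : ∀ s, t s ≠ bot)
    (h3 : es.psi3 i l a t) (h4 : es.psi4 i a phi)
    (hfs : es.FairSend i l) :
    es.phi3spec i l phi := by
  rcases h4 with ⟨hex, hrec⟩ | hnone
  · rcases EventStructure.recurrent_or_distrib.1 hrec with hnotphi | hact
    · exact Or.inl ⟨hex, hnotphi⟩
    · have hsent : es.Recurrent i (fun e => es.stateAfter e (mv l) ≠ bot) :=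
        hact.mono fun e he hk => h3 e he hk ▸ ht _
      exact Or.inr (Or.inr ⟨hex, hfs hsent⟩)
  · exact Or.inr (Or.inl hnone)

/-- Liveness part of the fairness-program lemma: in any event structure
satisfying the event-structure axioms, clauses (ψ₃) and (ψ₄) of
`Fair-Pg(φ,t,l,a)` together with the strong communication-fairness condition
`FairSend(l)` imply the liveness clause (φ₃) of the specification
`Fair(φ,t,l)`. -/
theorem fair_pg_liveness
    {AG Links Act Val X : Type} {source dest : Links → AG} {bot : Val}
    {mv : Links → X}
    (es : EventStructure AG Links Act Val X source dest bot mv)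
    (i j : AG) (hij : i ≠ j) (l : Links) (hsrc : source l = i)
    (hdest : dest l = j) (a : Act)
    (phi : (X → Val) → Prop) (t : (X → Val) → Val) (ht : ∀ s, t s ≠ bot)
    (h3 : es.psi3 i l a t) (h4 : es.psi4 i a phi)
    (hfs : es.FairSend i l) :
    es.phi3spec i l phi :=
  fair_pg_liveness_general es i l a phi t ht h3 h4 hfs
end

section
/- (Consistency of the fairness program.) Fix agents i ≠ j, a link l with source(l) = i and dest(l) = j, a local action a, a predicate φ on S_i, and a map t : S_i → Val with t(s) ≠ ⊥ for all s. Then there exists an event structure satisfying the event-structure axioms in which all four clauses (ψ₁), (ψ₂), (ψ₃), (ψ₄) of Fair-Pg(φ,t,l,a) hold. (If ¬φ(s*) for some local state s* of i, an empty event structure with initstate_i = s* suffices; otherwise an infinite event structure in which i repeatedly performs action a, sending t on l, and j repeatedly receives on l suffices.) -/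
namespace EventStructure

variable {AG Links Act Val X : Type} {source dest : Links → AG} {bot : Val} {mv : Links → X}

def FairPg (es : EventStructure AG Links Act Val X source dest bot mv) (i : AG) (l : Links)
    (a : Act) (phi : (X → Val) → Prop) (t : (X → Val) → Val) : Prop :=
  es.psi1 i l a ∧ es.psi2 i a phi ∧ es.psi3 i l a t ∧ es.psi4 i a phi

def empty (s : X → Val) : EventStructure AG Links Act Val X source dest bot mv where
  E := Empty
  agent := Empty.elim
  kind := Empty.elim
  val := Empty.elim
  stateBefore := Empty.elim
  stateAfter := Empty.elim
  initstate _ := s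
  lt _ := Empty.elim
  send := Empty.elim
  lt_irrefl _ := nofun
  lt_trans _ := nofun
  lt_total _ := nofun
  rcv_agent := nofun
  rcv_send_agent := nofun
  rcv_val := nofun
  rcv_val_ne := nofun

theorem fairPg_empty {s : X → Val} {i : AG} {l : Links} {a : Act} {phi : (X → Val) → Prop}
    {t : (X → Val) → Val} (hs : ¬ phi s) :
    (empty s : EventStructure AG Links Act Val X source dest bot mv).FairPg i l a phi t :=
  ⟨nofun, nofun, nofun, .inr ⟨nofun, hs⟩⟩

open Classical in
/-- `inl n` is the `n`-th `a`-event of `source l`, writing `t s` to `msg(l)`, and `inr n` is its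
receipt by `dest l`. -/
noncomputable def sendRecvRun (s : X → Val) (l : Links) (a : Act) (t : (X → Val) → Val)
    (ht : t s ≠ bot) : EventStructure AG Links Act Val X source dest bot mv where
  E := ℕ ⊕ ℕ
  agent := Sum.elim (fun _ => source l) (fun _ => dest l)
  kind := Sum.elim (fun _ => .inr a) (fun _ => .inl l)
  val _ := t s
  stateBefore _ := s
  stateAfter := Sum.elim (fun _ => Function.update s (mv l) (t s)) (fun _ => s)
  initstate _ := s
  lt _ e e' := toLex e < toLex e'
  send := Sum.elim .inl .inl
  lt_irrefl _ e := _root_.lt_irrefl (toLex e)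
  lt_trans _ _ _ _ := _root_.lt_trans
  lt_total _ e e' _ _ :=
    (lt_trichotomy (toLex e) (toLex e')).imp_right (.imp_left (toLex.injective ·))
  rcv_agent := by rintro (n | n) l' ⟨⟩; rfl
  rcv_send_agent := by rintro (n | n) l' ⟨⟩; rfl
  rcv_val := by rintro (n | n) l' ⟨⟩; simp
  rcv_val_ne := by rintro (n | n) l' ⟨⟩; exact ht

theorem fairPg_sendRecvRun {s : X → Val} {l : Links} {a : Act} {phi : (X → Val) → Prop}
    {t : (X → Val) → Val} (hsd : source l ≠ dest l) (hs : phi s) (ht : t s ≠ bot) :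
    (sendRecvRun s l a t ht : EventStructure AG Links Act Val X source dest bot mv).FairPg
      (source l) l a phi t := by
  refine ⟨?_, fun _ _ _ => hs, ?_, .inl ⟨⟨.inl 0, rfl⟩, ?_⟩⟩
  · rintro (n | n) h _
    exacts [rfl, absurd h.symm hsd]
  · rintro (n | n) _ ⟨⟩
    simp [sendRecvRun]
  · rintro (n | n) h
    exacts [⟨.inl n, rfl, .inr rfl, .inr rfl⟩, absurd h.symm hsd]

end EventStructure

/-- Consistency of the fairness program: there exists an event structure
satisfying the event-structure axioms in which all four clauses (ψ₁)–(ψ₄) of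
`Fair-Pg(φ,t,l,a)` hold. -/
theorem fair_pg_consistent
    (AG Links Act Val X : Type) (source dest : Links → AG) (bot : Val)
    (mv : Links → X)
    (i j : AG) (hij : i ≠ j) (l : Links) (hsrc : source l = i)
    (hdest : dest l = j) (a : Act)
    (phi : (X → Val) → Prop) (t : (X → Val) → Val) (ht : ∀ s, t s ≠ bot) :
    ∃ es : EventStructure AG Links Act Val X source dest bot mv,
      es.psi1 i l a ∧ es.psi2 i a phi ∧ es.psi3 i l a t ∧ es.psi4 i a phi := by
  subst hsrc hdest
  by_cases h : ∃ s, ¬ phi s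
  · obtain ⟨s, hs⟩ := h
    exact ⟨_, EventStructure.fairPg_empty hs⟩
  · exact ⟨_, EventStructure.fairPg_sendRecvRun hij (not_exists_not.mp h _) (ht fun _ => bot)⟩
end

section
/- (Consistency of the composition of two fairness programs.) Let l and l' be distinct links with source(l) = i, dest(l) = j, source(l') = i', dest(l') = j', let a and a' be distinct local actions, let φ be a predicate on S_i, φ' a predicate on S_{i'}, and let t : S_i → Val and t' : S_{i'} → Val with t(s) ≠ ⊥ and t'(s') ≠ ⊥ for all s, s'. Then there exists an event structure satisfying the event-structure axioms in which all four clauses (ψ₁)–(ψ₄) of Fair-Pg(φ,t,l,a) hold (with agent i, link l, action a) and all four clauses (ψ₁)–(ψ₄) of Fair-Pg(φ',t',l',a') hold (with agent i', link l', action a'). -/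
namespace EventStructure

variable {AG Links Act Val X : Type} {source dest : Links → AG} {bot : Val} {mv : Links → X}

def IsFairPg (es : EventStructure AG Links Act Val X source dest bot mv) (i : AG) (l : Links)
    (a : Act) (phi : (X → Val) → Prop) (t : (X → Val) → Val) : Prop :=
  es.psi1 i l a ∧ es.psi2 i a phi ∧ es.psi3 i l a t ∧ es.psi4 i a phi

def ofLocal (E : Type) [LinearOrder E] (agent : E → AG) (act : E → Act)
    (before after : E → X → Val) (init : AG → X → Val) :
    EventStructure AG Links Act Val X source dest bot mv where
  E := E
  agent := agent
  kind := Sum.inr ∘ act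
  val _ := bot
  stateBefore := before
  stateAfter := after
  initstate := init
  lt _ := (· < ·)
  send := id
  lt_irrefl _ := _root_.lt_irrefl
  lt_trans _ _ _ _ := _root_.lt_trans
  lt_total _ e e' _ _ := lt_trichotomy e e'
  rcv_agent _ _ h := absurd h Sum.inr_ne_inl
  rcv_send_agent _ _ h := absurd h Sum.inr_ne_inl
  rcv_val _ _ h := absurd h Sum.inr_ne_inl
  rcv_val_ne _ _ h := absurd h Sum.inr_ne_inl

theorem psi4_of_forall_not {es : EventStructure AG Links Act Val X source dest bot mv}
    {i : AG} {a : Act} {phi : (X → Val) → Prop} (h : ∀ s, ¬ phi s) : es.psi4 i a phi := by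
  by_cases hi : ∃ e, es.agent e = i
  · exact Or.inl ⟨hi, fun e he => ⟨e, he, Or.inr rfl, Or.inl (h _)⟩⟩
  · exact Or.inr ⟨hi, h _⟩

section Family

open Classical

variable {ι : Type} [LinearOrder ι] (i : ι → AG) (l : ι → Links) (a : ι → Act)
  (phi : ι → (X → Val) → Prop) (t : ι → (X → Val) → Val)

/-- `(n, k)` is the `n`-th event of program `k`. -/
abbrev FairPgEvent : Type := {p : ℕ ×ₗ ι // ∃ s, phi (ofLex p).2 s}

variable {phi} in
def FairPgEvent.prog (e : FairPgEvent phi) : ι := (ofLex e.1).2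

noncomputable def fairPgRun : EventStructure AG Links Act Val X source dest bot mv :=
  ofLocal (FairPgEvent phi) (fun e => i e.prog) (fun e => a e.prog) (fun e => e.2.choose)
    (fun e => Function.update (fun _ => bot) (mv (l e.prog)) (t e.prog e.2.choose))
    (fun _ _ => bot)

variable {i l a phi t}

theorem fairPgRun_psi1 (hl : Function.Injective (mv ∘ l)) (k : ι) :
    (fairPgRun i l a phi t : EventStructure AG Links Act Val X source dest bot mv).psi1
      (i k) (l k) (a k) := by
  intro e _ hne
  obtain rfl : k = e.prog := hl (not_not.1 fun h => hne (Function.update_of_ne h _ fun _ => bot))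
  rfl

theorem fairPgRun_psi2 (ha : Function.Injective a) (k : ι) :
    (fairPgRun i l a phi t : EventStructure AG Links Act Val X source dest bot mv).psi2
      (i k) (a k) (phi k) := by
  intro e _ hk
  obtain rfl : e.prog = k := ha (Sum.inr.inj hk)
  exact e.2.choose_spec

theorem fairPgRun_psi3 (ha : Function.Injective a) (k : ι) :
    (fairPgRun i l a phi t : EventStructure AG Links Act Val X source dest bot mv).psi3
      (i k) (l k) (a k) (t k) := by
  intro e _ hk
  obtain rfl : e.prog = k := ha (Sum.inr.inj hk)
  exact Function.update_self (f := fun _ : X => bot) ..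

theorem fairPgRun_psi4 (k : ι) :
    (fairPgRun i l a phi t : EventStructure AG Links Act Val X source dest bot mv).psi4
      (i k) (a k) (phi k) := by
  by_cases hk : ∃ s, phi k s
  · refine Or.inl ⟨⟨⟨toLex (0, k), hk⟩, rfl⟩, fun e _ => ?_⟩
    refine ⟨⟨toLex ((ofLex e.1).1 + 1, k), hk⟩, rfl, Or.inl ?_, Or.inr rfl⟩
    exact Prod.Lex.toLex_lt_toLex.2 (Or.inl (Nat.lt_succ_self _))
  · exact psi4_of_forall_not (not_exists.1 hk)

theorem fairPgRun_isFairPg (hl : Function.Injective (mv ∘ l)) (ha : Function.Injective a)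
    (k : ι) :
    (fairPgRun i l a phi t : EventStructure AG Links Act Val X source dest bot mv).IsFairPg
      (i k) (l k) (a k) (phi k) (t k) :=
  ⟨fairPgRun_psi1 hl k, fairPgRun_psi2 ha k, fairPgRun_psi3 ha k, fairPgRun_psi4 k⟩

end Family

end EventStructure

theorem fair_pg_compose_consistent_general
    (AG Links Act Val X : Type) (source dest : Links → AG) (bot : Val)
    (mv : Links → X) (hmv : Function.Injective mv)
    (i i' : AG) (l l' : Links) (hll' : l ≠ l')
    (a a' : Act) (haa' : a ≠ a')
    (phi : (X → Val) → Prop) (phi' : (X → Val) → Prop)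
    (t : (X → Val) → Val) (t' : (X → Val) → Val) :
    ∃ es : EventStructure AG Links Act Val X source dest bot mv,
      (es.psi1 i l a ∧ es.psi2 i a phi ∧ es.psi3 i l a t ∧ es.psi4 i a phi) ∧
      (es.psi1 i' l' a' ∧ es.psi2 i' a' phi' ∧ es.psi3 i' l' a' t' ∧
        es.psi4 i' a' phi') := by
  have hl : Function.Injective (mv ∘ fun k => cond k l l') :=
    Bool.injective_iff.2 (hmv.ne hll').symm
  have ha : Function.Injective fun k => cond k a a' := Bool.injective_iff.2 haa'.symm
  have h := EventStructure.fairPgRun_isFairPg (source := source) (dest := dest) (bot := bot)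
    (i := fun k => cond k i i') (phi := fun k => cond k phi phi') (t := fun k => cond k t t') hl ha
  exact ⟨_, h true, h false⟩

/-- Consistency of the composition of two fairness programs: for distinct
links `l, l'` and distinct actions `a, a'`, there exists an event structure
satisfying the event-structure axioms in which all four clauses (ψ₁)–(ψ₄) of
`Fair-Pg(φ,t,l,a)` and all four clauses of `Fair-Pg(φ',t',l',a')` hold.
(Distinct links have distinct message variables: `mv` is injective.) -/
theorem fair_pg_compose_consistent
    (AG Links Act Val X : Type) (source dest : Links → AG) (bot : Val)
    (mv : Links → X) (hmv : Function.Injective mv)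
    (i j i' j' : AG) (l l' : Links) (hll' : l ≠ l')
    (hsrc : source l = i) (hdest : dest l = j)
    (hsrc' : source l' = i') (hdest' : dest l' = j')
    (a a' : Act) (haa' : a ≠ a')
    (phi : (X → Val) → Prop) (phi' : (X → Val) → Prop)
    (t : (X → Val) → Val) (t' : (X → Val) → Val)
    (ht : ∀ s, t s ≠ bot) (ht' : ∀ s, t' s ≠ bot) :
    ∃ es : EventStructure AG Links Act Val X source dest bot mv,
      (es.psi1 i l a ∧ es.psi2 i a phi ∧ es.psi3 i l a t ∧ es.psi4 i a phi) ∧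
      (es.psi1 i' l' a' ∧ es.psi2 i' a' phi' ∧ es.psi3 i' l' a' t' ∧
        es.psi4 i' a' phi') :=
  fair_pg_compose_consistent_general AG Links Act Val X source dest bot mv hmv i i' l l' hll' a a'
    haa' phi phi' t t'
end

section
/- (Sender–receiver induction underlying the STP refinement theorem.) Let P_S, P_R : ℕ → ℕ → Prop, where P_S(n, m) is read as 'the sender knows that the receiver knows bit n at time m' and P_R(n, m) as 'the receiver knows bit n at time m'. Assume: (stability) for all n, m ≤ m', P_S(n, m) → P_S(n, m') and P_R(n, m) → P_R(n, m'); (transfer) for all n, m, P_S(n, m) → ∃ m' ≥ m, P_R(n, m'); (receiver-to-sender fairness) for all m, n, if P_R(k, m) holds for all k < n and ¬P_R(n, m), then there exists m' ≥ m such that either P_S(k, m') holds for all k < n, or P_R(n, m'); (sender-to-receiver fairness) for all m, n, if P_S(k, m) holds for all k < n and ¬P_S(n, m), then there exists m' ≥ m such that P_R(n, m') or P_S(n, m'). Then for every n there exists m with P_R(n, m); that is, the receiver eventually knows every bit. -/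
/-!
Induction on `n` with the invariant "at some time the receiver knows every bit below `n`".
From such a time, fairness of the channel to the sender yields either bit `n` at the receiver or
a time at which the sender knows that the receiver knows every bit below `n`; from there fairness
of the channel to the receiver, together with transfer, delivers bit `n`. Stability of the
receiver's knowledge keeps the earlier bits.
-/

section

variable {T : Type*} [Preorder T] {PS PR : ℕ → T → Prop}

theorem exists_ge_PR_of_forall_lt_PS
    (htransfer : ∀ n m, PS n m → ∃ m', m ≤ m' ∧ PR n m')
    (hSR : ∀ m n, (∀ k < n, PS k m) → ¬ PS n m → ∃ m', m ≤ m' ∧ (PR n m' ∨ PS n m'))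
    {n : ℕ} {m : T} (hS : ∀ k < n, PS k m) : ∃ m', m ≤ m' ∧ PR n m' := by
  by_cases hn : PS n m
  · exact htransfer n m hn
  obtain ⟨m₁, hm₁, hR₁ | hS₁⟩ := hSR m n hS hn
  · exact ⟨m₁, hm₁, hR₁⟩
  · obtain ⟨m₂, hm₂, hR₂⟩ := htransfer n m₁ hS₁
    exact ⟨m₂, hm₁.trans hm₂, hR₂⟩

theorem exists_ge_PR_of_forall_lt_PR
    (htransfer : ∀ n m, PS n m → ∃ m', m ≤ m' ∧ PR n m')
    (hRS : ∀ m n, (∀ k < n, PR k m) → ¬ PR n m →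
      ∃ m', m ≤ m' ∧ ((∀ k < n, PS k m') ∨ PR n m'))
    (hSR : ∀ m n, (∀ k < n, PS k m) → ¬ PS n m → ∃ m', m ≤ m' ∧ (PR n m' ∨ PS n m'))
    {n : ℕ} {m : T} (hR : ∀ k < n, PR k m) : ∃ m', m ≤ m' ∧ PR n m' := by
  by_cases hn : PR n m
  · exact ⟨m, le_rfl, hn⟩
  obtain ⟨m₁, hm₁, hS₁ | hR₁⟩ := hRS m n hR hn
  · obtain ⟨m₂, hm₂, hR₂⟩ := exists_ge_PR_of_forall_lt_PS htransfer hSR hS₁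
    exact ⟨m₂, hm₁.trans hm₂, hR₂⟩
  · exact ⟨m₁, hm₁, hR₁⟩

theorem exists_forall_lt_PR [Nonempty T]
    (hPRstable : ∀ n m m', m ≤ m' → PR n m → PR n m')
    (htransfer : ∀ n m, PS n m → ∃ m', m ≤ m' ∧ PR n m')
    (hRS : ∀ m n, (∀ k < n, PR k m) → ¬ PR n m →
      ∃ m', m ≤ m' ∧ ((∀ k < n, PS k m') ∨ PR n m'))
    (hSR : ∀ m n, (∀ k < n, PS k m) → ¬ PS n m → ∃ m', m ≤ m' ∧ (PR n m' ∨ PS n m')) :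
    ∀ n, ∃ m, ∀ k < n, PR k m
  | 0 => ⟨Classical.arbitrary T, fun k hk => absurd hk k.not_lt_zero⟩
  | n + 1 => by
    obtain ⟨m, hm⟩ := exists_forall_lt_PR hPRstable htransfer hRS hSR n
    obtain ⟨m', hmm', hn⟩ := exists_ge_PR_of_forall_lt_PR htransfer hRS hSR hm
    refine ⟨m', fun k hk => ?_⟩
    rcases Nat.lt_succ_iff_lt_or_eq.mp hk with hk | rfl
    · exact hPRstable k m m' hmm' (hm k hk)
    · exact hn

end

theorem stp_sender_receiver_induction_general (PS PR : ℕ → ℕ → Prop)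
    (hPRstable : ∀ n m m', m ≤ m' → PR n m → PR n m')
    (htransfer : ∀ n m, PS n m → ∃ m', m ≤ m' ∧ PR n m')
    (hRS : ∀ m n, (∀ k < n, PR k m) → ¬ PR n m →
      ∃ m', m ≤ m' ∧ ((∀ k < n, PS k m') ∨ PR n m'))
    (hSR : ∀ m n, (∀ k < n, PS k m) → ¬ PS n m →
      ∃ m', m ≤ m' ∧ (PR n m' ∨ PS n m')) :
    ∀ n, ∃ m, PR n m := fun n =>
  (exists_forall_lt_PR hPRstable htransfer hRS hSR (n + 1)).imp fun _ hm => hm n n.lt_succ_self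

/-- Sender–receiver induction underlying the STP refinement theorem.
`PS n m` reads "the sender knows that the receiver knows bit `n` at time `m`"
and `PR n m` reads "the receiver knows bit `n` at time `m`".  Under stability,
transfer, and the two fairness conditions, the receiver eventually knows every
bit. -/
theorem stp_sender_receiver_induction (PS PR : ℕ → ℕ → Prop)
    (hPSstable : ∀ n m m', m ≤ m' → PS n m → PS n m')
    (hPRstable : ∀ n m m', m ≤ m' → PR n m → PR n m')
    (htransfer : ∀ n m, PS n m → ∃ m', m ≤ m' ∧ PR n m')
    (hRS : ∀ m n, (∀ k < n, PR k m) → ¬ PR n m →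
      ∃ m', m ≤ m' ∧ ((∀ k < n, PS k m') ∨ PR n m'))
    (hSR : ∀ m n, (∀ k < n, PS k m) → ¬ PS n m →
      ∃ m', m ≤ m' ∧ (PR n m' ∨ PS n m')) :
    ∀ n, ∃ m, PR n m :=
  stp_sender_receiver_induction_general PS PR hPRstable htransfer hRS hSR
end
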